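/- arXiv:cs/0502088 — 6 statements merged into one kernel-verified Lean document; each statement's English description precedes it below -/
import Mathlib

section
/- Let P be a definite logic program. Then there is a unique two-valued model M of P for which there exists a total level mapping l : B_P → α (α an ordinal) such that for each atom A ∈ M there exists a clause A ← A₁,…,Aₙ in ground(P) with Aᵢ ∈ M and l(A) > l(Aᵢ) for all i = 1,…,n. Furthermore, M is the least two-valued model of P. -/
set_option linter.unusedSectionVars false

/-- A ground definite clause `head ← body` over atoms `atom`. -/
structure DClause (atom : Type*) where
  head : atom
  body : Set atom

/-- A definite logic program: a set of ground definite clauses. -/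
abbrev DProgram (atom : Type*) := Set (DClause atom)

/-- The immediate consequence operator `T_P⁺`. -/
def TD {atom : Type*} (P : DProgram atom) (I : Set atom) : Set atom :=
  {A | ∃ c ∈ P, c.head = A ∧ c.body ⊆ I}

/-- `M` is a two-valued model of the definite program `P`. -/
def DModel {atom : Type*} (P : DProgram atom) (M : Set atom) : Prop :=
  ∀ c ∈ P, c.body ⊆ M → c.head ∈ M

universe v u
variable {atom : Type u} [Countable atom]

/-- Ordinal-indexed approximations of the least fixed point of `T_P⁺`. -/
def approx (P : DProgram atom) (o : Ordinal.{v}) : Set atom :=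
  TD P (⋃ o' : Set.Iio o, approx P o'.1)
termination_by o
decreasing_by exact o'.2

lemma approx_eq (P : DProgram atom) (o : Ordinal.{v}) :
    approx.{v} P o = TD P {A | ∃ o' < o, A ∈ approx.{v} P o'} := by
  have h : (⋃ o' : Set.Iio o, approx.{v} P o'.1)
      = {A | ∃ o' < o, A ∈ approx.{v} P o'} := by
    ext A; simp
  rw [approx, h]

/-- The least model: union of all approximations. -/
def Mset (P : DProgram atom) : Set atom := {A | ∃ o : Ordinal.{v}, A ∈ approx.{v} P o}

/-- The level mapping: the least stage at which an atom appears. -/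
noncomputable def lev (P : DProgram atom) (A : atom) : Ordinal.{v} :=
  sInf {o : Ordinal.{v} | A ∈ approx.{v} P o}

lemma mem_approx_lev {P : DProgram atom} {A : atom} (h : A ∈ Mset.{v} P) :
    A ∈ approx.{v} P (lev.{v} P A) :=
  csInf_mem (s := {o : Ordinal.{v} | A ∈ approx.{v} P o}) h

lemma lev_le {P : DProgram atom} {A : atom} {o : Ordinal.{v}}
    (h : A ∈ approx.{v} P o) : lev.{v} P A ≤ o :=
  csInf_le' h

lemma Mset_model (P : DProgram atom) : DModel P (Mset.{v} P) := by
  intro c hc hbody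
  set f : c.body → Ordinal.{v} := fun B => lev.{v} P B.1 with hf
  refine ⟨Order.succ (⨆ B : c.body, f B), ?_⟩
  rw [approx_eq]
  refine ⟨c, hc, rfl, ?_⟩
  intro B hB
  have h1 : B ∈ approx.{v} P (lev.{v} P B) := mem_approx_lev (hbody hB)
  have h2 : f ⟨B, hB⟩ ≤ ⨆ B : c.body, f B :=
    le_ciSup Ordinal.bddAbove_of_small (⟨B, hB⟩ : c.body)
  exact Set.mem_setOf.mpr ⟨lev.{v} P B,
    lt_of_le_of_lt h2 (Order.lt_succ _), h1⟩

lemma Mset_level (P : DProgram atom) :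
    ∀ A ∈ Mset.{v} P, ∃ c ∈ P, c.head = A ∧ c.body ⊆ Mset.{v} P ∧
      ∀ B ∈ c.body, lev.{v} P B < lev.{v} P A := by
  intro A hA
  have h := mem_approx_lev hA
  rw [approx_eq] at h
  obtain ⟨c, hc, hhead, hbody⟩ := h
  refine ⟨c, hc, hhead, ?_, ?_⟩
  · intro B hB
    obtain ⟨o', _, hB'⟩ := hbody hB
    exact ⟨o', hB'⟩
  · intro B hB
    obtain ⟨o', ho', hB'⟩ := hbody hB
    exact lt_of_le_of_lt (lev_le hB') ho'

lemma Mset_least (P : DProgram atom) {M' : Set atom} (hM' : DModel P M') :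
    Mset.{v} P ⊆ M' := by
  have key : ∀ o : Ordinal.{v}, approx.{v} P o ⊆ M' := by
    intro o
    induction o using Ordinal.induction with
    | h o IH =>
      intro A hA
      rw [approx_eq] at hA
      obtain ⟨c, hc, hhead, hbody⟩ := hA
      refine hhead ▸ hM' c hc ?_
      intro B hB
      obtain ⟨o', ho', hB'⟩ := hbody hB
      exact IH o' ho' hB'
  rintro A ⟨o, hA⟩
  exact key o hA

/-- For a definite program `P` there is a unique two-valued model `M`
admitting a total level mapping `l` such that every `A ∈ M` has a clause
`A ← A₁,…,Aₙ` in `ground(P)` with all `Aᵢ ∈ M` and `l(A) > l(Aᵢ)`;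
moreover this `M` is the least two-valued model of `P`. -/
theorem stmt2 {atom : Type*} [Countable atom] (P : DProgram atom) :
    ∃ M : Set atom,
      (DModel P M ∧ ∃ l : atom → Ordinal, ∀ A ∈ M,
        ∃ c ∈ P, c.head = A ∧ c.body ⊆ M ∧ ∀ B ∈ c.body, l B < l A) ∧
      (∀ M' : Set atom,
        (DModel P M' ∧ ∃ l : atom → Ordinal, ∀ A ∈ M',
          ∃ c ∈ P, c.head = A ∧ c.body ⊆ M' ∧ ∀ B ∈ c.body, l B < l A) → M' = M) ∧
      (∀ M' : Set atom, DModel P M' → M ⊆ M') := by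
  refine ⟨Mset P, ⟨Mset_model P, lev P, Mset_level P⟩, ?_, fun M' h => Mset_least P h⟩
  rintro M' ⟨hmod, l, hl⟩
  apply Set.Subset.antisymm _ (Mset_least P hmod)
  have key : ∀ o : Ordinal, ∀ A ∈ M', l A < o → A ∈ Mset P := by
    intro o
    induction o using Ordinal.induction with
    | h o IH =>
      intro A hA hlt
      obtain ⟨c, hc, hhead, hbody, hlev⟩ := hl A hA
      refine hhead ▸ Mset_model P c hc ?_
      intro B hB
      exact IH (l A) hlt B (hbody hB) (hlev B hB)
  intro A hA
  exact key (Order.succ (l A)) A hA (Order.lt_succ _)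
end

section
/- Every maxstable model of a normal program P is a supported model of P, i.e., if M = gfp(T⁺_{P/M}) then M is both a model of P and satisfies M ⊆ T_P⁺(M) (each atom of M is supported by a clause whose positive body is in M and negative atoms are outside M). -/
/-- A ground normal clause `head ← pos, ¬neg` over atoms `atom`. -/
structure Clause (atom : Type*) where
  head : atom
  pos : Set atom
  neg : Set atom

/-- A normal logic program: a set of ground normal clauses. -/
abbrev Program (atom : Type*) := Set (Clause atom)

/-- The immediate consequence operator ignoring negative body atoms; on programs all of
whose clauses have empty negative body (definite programs, reducts) this is `T_P⁺`. -/
def TDef {atom : Type*} (P : Program atom) (I : Set atom) : Set atom :=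
  {A | ∃ c ∈ P, c.head = A ∧ c.pos ⊆ I}

/-- `TDef` as a monotone operator on the complete lattice of subsets of `B_P`. -/
def TDefHom {atom : Type*} (P : Program atom) : Set atom →o Set atom :=
  ⟨TDef P, by
    intro I J h A hA
    obtain ⟨c, hc, hh, hb⟩ := hA
    exact ⟨c, hc, hh, hb.trans h⟩⟩

/-- The two-valued single-step operator `T_P⁺` of a normal program:
`A ∈ T_P⁺(I)` iff some clause `A ← pos, ¬neg` of `ground(P)` has `pos ⊆ I` and
`neg ∩ I = ∅`. -/
def TPlus {atom : Type*} (P : Program atom) (I : Set atom) : Set atom :=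
  {A | ∃ c ∈ P, c.head = A ∧ c.pos ⊆ I ∧ ∀ b ∈ c.neg, b ∉ I}

/-- `M` is a two-valued model of the normal program `P`. -/
def isModel {atom : Type*} (P : Program atom) (M : Set atom) : Prop :=
  ∀ c ∈ P, c.pos ⊆ M → (∀ b ∈ c.neg, b ∉ M) → c.head ∈ M

/-- The Gelfond-Lifschitz reduct `P/M`: all definite clauses `A ← pos` arising from
clauses `A ← pos, ¬neg` of `ground(P)` with `neg ∩ M = ∅`. -/
def reduct {atom : Type*} (P : Program atom) (M : Set atom) : Program atom :=
  {c' | ∃ c ∈ P, (∀ b ∈ c.neg, b ∉ M) ∧ c' = ⟨c.head, c.pos, ∅⟩}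

/-- Every maxstable model of a normal program `P` is a supported model of
`P`: if `M = gfp(T⁺_{P/M})` then `M` is a two-valued model of `P` and `M ⊆ T_P⁺(M)`. -/
theorem stmt7 {atom : Type*} (P : Program atom) (M : Set atom)
    (h : M = OrderHom.gfp (TDefHom (reduct P M))) :
    isModel P M ∧ M ⊆ TPlus P M := by
  have hfix : TDef (reduct P M) M = M := by
    have hf := (TDefHom (reduct P M)).isFixedPt_gfp
    unfold Function.IsFixedPt at hf
    rw [← h] at hf
    exact hf
  constructor
  · intro c hc hpos hneg
    have : c.head ∈ TDef (reduct P M) M :=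
      ⟨⟨c.head, c.pos, ∅⟩, ⟨c, hc, hneg, rfl⟩, rfl, hpos⟩
    exact hfix ▸ this
  · intro A hA
    rw [← hfix] at hA
    obtain ⟨c', ⟨c, hc, hneg, hce⟩, hh, hb⟩ := hA
    subst hce
    exact ⟨c, hc, hh, hb, hneg⟩
end

section
/- Let F be an antitonic operator on a complete lattice L (x ≤ y implies F(y) ≤ F(x)), so that F² is monotonic with least fixed point L₀ and greatest fixed point G₀. Then F(L₀) = G₀ and F(G₀) = L₀. -/
/-- Let `F` be an antitonic operator on a complete lattice, so that `F²`
is monotone with least fixed point `L₀ = lfp(F²)` and greatest fixed point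
`G₀ = gfp(F²)` (Knaster–Tarski). Then `F(L₀) = G₀` and `F(G₀) = L₀`. -/
theorem stmt10 {L : Type*} [CompleteLattice L] (F : L → L) (hF : Antitone F) :
    F (OrderHom.lfp ⟨F ∘ F, fun _ _ h => hF (hF h)⟩) =
      OrderHom.gfp ⟨F ∘ F, fun _ _ h => hF (hF h)⟩ ∧
    F (OrderHom.gfp ⟨F ∘ F, fun _ _ h => hF (hF h)⟩) =
      OrderHom.lfp ⟨F ∘ F, fun _ _ h => hF (hF h)⟩ := by
  set G : L →o L := ⟨F ∘ F, fun _ _ h => hF (hF h)⟩ with hG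
  set l := OrderHom.lfp G with hl
  set g := OrderHom.gfp G with hgdef
  have hfl : G l = l := OrderHom.map_lfp G
  have hfg : G g = g := OrderHom.map_gfp G
  -- F l is a fixed point of G
  have hFl : G (F l) = F l := by
    show F (F (F l)) = F l
    exact congrArg F hfl
  have hFg : G (F g) = F g := by
    show F (F (F g)) = F g
    exact congrArg F hfg
  have h1 : F l ≤ g := OrderHom.le_gfp G (le_of_eq hFl.symm)
  have h2 : l ≤ F g := OrderHom.lfp_le G (le_of_eq hFl) |>.trans (le_refl _) |> fun _ => OrderHom.lfp_le G (le_of_eq hFg)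
  have h3 : g ≤ F l := by
    calc g = G g := hfg.symm
      _ = F (F g) := rfl
      _ ≤ F l := hF h2
  have h4 : F g ≤ l := by
    calc F g ≤ F (F l) := hF h1
      _ = G l := rfl
      _ = l := hfl
  exact ⟨le_antisymm h1 h3, le_antisymm h4 h2⟩
end

section
/- For a normal logic program P and any partial interpretation I, the union of any family of self-founded sets of P with respect to I is again a self-founded set of P with respect to I; consequently there exists a greatest self-founded set of P with respect to I. -/
/-- A partial (three-valued) interpretation: a consistent set of literals, given by the
set `pos` of atoms that are true and the set `neg` of atoms that are false. -/
structure PInterp (atom : Type*) where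
  pos : Set atom
  neg : Set atom
  consistent : ∀ A, A ∈ pos → A ∉ neg

/-- The inclusion (knowledge) order on partial interpretations. -/
def ple {atom : Type*} (I J : PInterp atom) : Prop :=
  I.pos ⊆ J.pos ∧ I.neg ⊆ J.neg

/-- `S ⊆ B_P` is a self-founded set of `P` with respect to `I`: `S ∪ I` is consistent
and each `A ∈ S` has a clause `A ← body` in `ground(P)` such that either (Si) every
literal of `body` is true in `I`, or (Sii) some positive atoms of `body` lie in `S` and
all other literals of `body` are true in `I`. -/
def SelfFounded {atom : Type*} (P : Program atom) (I : PInterp atom) (S : Set atom) :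
    Prop :=
  (∀ A ∈ S, A ∉ I.neg) ∧
  ∀ A ∈ S, ∃ c ∈ P, c.head = A ∧
    (∀ B ∈ c.pos, B ∈ I.pos ∨ B ∈ S) ∧ ∀ b ∈ c.neg, b ∈ I.neg

/-- `S_P(I)`: the greatest self-founded set of `P` with respect to `I`. -/
def SP {atom : Type*} (P : Program atom) (I : PInterp atom) : Set atom :=
  ⋃₀ {S | SelfFounded P I S}

/-- `F_P(I)`: the set of atoms `A` such that every clause `A ← body` in `ground(P)`
has some body literal false in `I`. -/
def FP {atom : Type*} (P : Program atom) (I : PInterp atom) : Set atom :=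
  {A | ∀ c ∈ P, c.head = A → (∃ B ∈ c.pos, B ∈ I.neg) ∨ ∃ b ∈ c.neg, b ∈ I.pos}

/-- For a normal program `P` and partial interpretation `I`, the union of
any family of self-founded sets of `P` w.r.t. `I` is again a self-founded set of `P`
w.r.t. `I`; consequently there is a greatest self-founded set of `P` w.r.t. `I`. -/
theorem stmt12 {atom : Type*} (P : Program atom) (I : PInterp atom) :
    (∀ 𝒮 : Set (Set atom), (∀ S ∈ 𝒮, SelfFounded P I S) →
      SelfFounded P I (⋃₀ 𝒮)) ∧
    ∃ G : Set atom, SelfFounded P I G ∧ ∀ S, SelfFounded P I S → S ⊆ G := by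
  have hU : ∀ 𝒮 : Set (Set atom), (∀ S ∈ 𝒮, SelfFounded P I S) →
      SelfFounded P I (⋃₀ 𝒮) := by
    intro 𝒮 h
    constructor
    · rintro A ⟨S, hS, hA⟩
      exact (h S hS).1 A hA
    · rintro A ⟨S, hS, hA⟩
      obtain ⟨c, hc, hh, hpos, hneg⟩ := (h S hS).2 A hA
      exact ⟨c, hc, hh, fun B hB => (hpos B hB).imp id (fun hBS => ⟨S, hS, hBS⟩), hneg⟩
  exact ⟨hU, SP P I, hU _ (fun S hS => hS), fun S hS T hT => ⟨S, hS, hT⟩⟩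
end

section
/- Let P be a normal logic program and M_P = lfp(CW_P) its maximally circular well-founded model. Then M_P = lfp(CGL_P²) ∪ ¬(B_P ∖ gfp(CGL_P²)), where CGL_P(I) = gfp(T⁺_{P/I}). -/
/-- The operator `CGL_P(I) = gfp(T⁺_{P/I})`. -/
def CGL {atom : Type*} (P : Program atom) (I : Set atom) : Set atom :=
  OrderHom.gfp (TDefHom (reduct P I))

theorem CGL_antitone {atom : Type*} (P : Program atom) : Antitone (CGL P) := by
  intro I J h
  apply OrderHom.gfp.monotone
  intro K A hA
  obtain ⟨c, ⟨c₀, hc₀, hneg, rfl⟩, hh, hp⟩ := hA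
  exact ⟨_, ⟨c₀, hc₀, fun b hb hbI => hneg b hb (h hbI), rfl⟩, hh, hp⟩

/-- `CGL_P²` as a monotone operator on the subsets of `B_P`. -/
def CGL2Hom {atom : Type*} (P : Program atom) : Set atom →o Set atom :=
  ⟨fun I => CGL P (CGL P I), fun _ _ h => CGL_antitone P (CGL_antitone P h)⟩

section Aux

variable {atom : Type*} (P : Program atom)

lemma PInterp.ext' {I J : PInterp atom} (h1 : I.pos = J.pos) (h2 : I.neg = J.neg) :
    I = J := by
  cases I; cases J; cases h1; cases h2; rfl

lemma tdef_cgl (I : Set atom) : TDef (reduct P I) (CGL P I) = CGL P I :=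
  (TDefHom (reduct P I)).map_gfp

lemma le_CGL {I S : Set atom} (h : S ⊆ TDef (reduct P I) S) : S ⊆ CGL P I :=
  OrderHom.le_gfp _ h

lemma CGL_lfp_eq : CGL P (OrderHom.lfp (CGL2Hom P)) = OrderHom.gfp (CGL2Hom P) := by
  have hfixL : CGL2Hom P (OrderHom.lfp (CGL2Hom P)) = OrderHom.lfp (CGL2Hom P) :=
    OrderHom.map_lfp _
  have hfixG : CGL2Hom P (OrderHom.gfp (CGL2Hom P)) = OrderHom.gfp (CGL2Hom P) :=
    OrderHom.map_gfp _
  have h1 : CGL2Hom P (CGL P (OrderHom.lfp (CGL2Hom P)))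
      = CGL P (OrderHom.lfp (CGL2Hom P)) := by
    show CGL P (CGL P (CGL P (OrderHom.lfp (CGL2Hom P)))) = _
    exact congrArg (CGL P) hfixL
  have h2 : CGL P (OrderHom.lfp (CGL2Hom P)) ≤ OrderHom.gfp (CGL2Hom P) :=
    OrderHom.le_gfp _ (le_of_eq h1.symm)
  have h3 : CGL2Hom P (CGL P (OrderHom.gfp (CGL2Hom P)))
      = CGL P (OrderHom.gfp (CGL2Hom P)) := by
    show CGL P (CGL P (CGL P (OrderHom.gfp (CGL2Hom P)))) = _
    exact congrArg (CGL P) hfixG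
  have h4 : OrderHom.lfp (CGL2Hom P) ≤ CGL P (OrderHom.gfp (CGL2Hom P)) :=
    OrderHom.lfp_le _ (le_of_eq h3)
  have h5 : OrderHom.gfp (CGL2Hom P) ≤ CGL P (OrderHom.lfp (CGL2Hom P)) := by
    have := CGL_antitone P h4
    calc OrderHom.gfp (CGL2Hom P) = CGL P (CGL P (OrderHom.gfp (CGL2Hom P))) :=
          hfixG.symm
      _ ≤ CGL P (OrderHom.lfp (CGL2Hom P)) := this
  exact le_antisymm h2 h5

lemma CGL_gfp_eq : CGL P (OrderHom.gfp (CGL2Hom P)) = OrderHom.lfp (CGL2Hom P) := by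
  conv_lhs => rw [← CGL_lfp_eq P]
  exact OrderHom.map_lfp (CGL2Hom P)

lemma lfp_le_gfp2 : OrderHom.lfp (CGL2Hom P) ⊆ OrderHom.gfp (CGL2Hom P) :=
  OrderHom.le_gfp _ (le_of_eq (OrderHom.map_lfp _).symm)

end Aux

/-- For a normal program `P` with maximally circular well-founded model
`M_P = lfp(CW_P)`, we have `M_P = lfp(CGL_P²) ∪ ¬(B_P ∖ gfp(CGL_P²))`, where
`CGL_P(I) = gfp(T⁺_{P/I})`. -/
theorem stmt15 {atom : Type*} (P : Program atom)
    (CW : PInterp atom → PInterp atom)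
    (hCW : ∀ I, (CW I).pos = SP P I ∧ (CW I).neg = FP P I)
    (M : PInterp atom) (hfix : CW M = M) (hleast : ∀ N, CW N = N → ple M N) :
    M.pos = OrderHom.lfp (CGL2Hom P) ∧
    M.neg = (OrderHom.gfp (CGL2Hom P))ᶜ := by
  classical
  set L := OrderHom.lfp (CGL2Hom P) with hLdef
  set G := OrderHom.gfp (CGL2Hom P) with hGdef
  have hLG : L ⊆ G := lfp_le_gfp2 P
  have hCGL_L : CGL P L = G := CGL_lfp_eq P
  have hCGL_G : CGL P G = L := CGL_gfp_eq P
  -- M is a fixpoint: its components are SP and FP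
  have hMpos : M.pos = SP P M := by rw [← (hCW M).1, hfix]
  have hMneg : M.neg = FP P M := by rw [← (hCW M).2, hfix]
  -- the candidate interpretation M₀ = (L, Gᶜ)
  set M0 : PInterp atom := ⟨L, Gᶜ, fun A hA hA' => hA' (hLG hA)⟩ with hM0def
  -- FP P M0 = Gᶜ
  have hFP0 : FP P M0 = Gᶜ := by
    ext A
    constructor
    · intro hA hAG
      rw [← hCGL_L, ← tdef_cgl] at hAG
      obtain ⟨c', ⟨c, hc, hneg, rfl⟩, hh, hp⟩ := hAG
      rcases hA c hc hh with ⟨B, hB, hBneg⟩ | ⟨b, hb, hbpos⟩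
      · exact hBneg (by rw [hCGL_L] at hp; exact hp hB)
      · exact hneg b hb hbpos
    · intro hAG c hc hh
      by_contra hno
      push_neg at hno
      obtain ⟨h1, h2⟩ := hno
      apply hAG
      rw [← hCGL_L, ← tdef_cgl]
      refine ⟨⟨c.head, c.pos, ∅⟩, ⟨c, hc, h2, rfl⟩, hh, ?_⟩
      intro B hB
      have := h1 B hB
      rw [hCGL_L]
      exact not_not.mp this
  -- SP P M0 = L
  have hLsf0 : SelfFounded P M0 L := by
    constructor
    · intro A hA hA'
      exact hA' (hLG hA)
    · intro A hA
      rw [← hCGL_G, ← tdef_cgl] at hA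
      obtain ⟨c', ⟨c, hc, hneg, rfl⟩, hh, hp⟩ := hA
      refine ⟨c, hc, hh, fun B hB => Or.inr (by rw [hCGL_G] at hp; exact hp hB),
        fun b hb => hneg b hb⟩
  have hSP0 : SP P M0 = L := by
    apply subset_antisymm
    · intro A hA
      obtain ⟨S, hS, hAS⟩ := hA
      have hSL : S ∪ L ⊆ CGL P G := by
        apply le_CGL
        intro B hB
        rcases hB with hBS | hBL
        · obtain ⟨c, hc, hh, hpos, hneg⟩ := hS.2 B hBS
          refine ⟨⟨c.head, c.pos, ∅⟩, ⟨c, hc, fun b hb => hneg b hb, rfl⟩, hh, ?_⟩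
          intro B' hB'
          rcases hpos B' hB' with h | h
          · exact Or.inr h
          · exact Or.inl h
        · rw [← hCGL_G, ← tdef_cgl] at hBL
          obtain ⟨c', hc', hh, hp⟩ := hBL
          exact ⟨c', hc', hh, fun B' hB' => Or.inr (by rw [hCGL_G] at hp; exact hp hB')⟩
      rw [hCGL_G] at hSL
      exact hSL (Or.inl hAS)
    · exact Set.subset_sUnion_of_mem hLsf0
  -- M0 is a fixpoint of CW
  have hfix0 : CW M0 = M0 := PInterp.ext' ((hCW M0).1.trans hSP0) ((hCW M0).2.trans hFP0)
  obtain ⟨hXL, hNG⟩ := hleast M0 hfix0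
  -- hXL : M.pos ⊆ L,  hNG : M.neg ⊆ Gᶜ
  set Y := M.negᶜ with hYdef
  have hGY : G ⊆ Y := fun a ha han => hNG han ha
  have hCL : CGL P Y ⊆ L := by rw [← hCGL_G]; exact CGL_antitone P hGY
  -- C := CGL P Y is self-founded w.r.t. M
  have hCsf : SelfFounded P M (CGL P Y) := by
    constructor
    · intro A hA hAn
      exact hNG hAn (hLG (hCL hA))
    · intro A hA
      rw [← tdef_cgl] at hA
      obtain ⟨c', ⟨c, hc, hneg, rfl⟩, hh, hp⟩ := hA
      refine ⟨c, hc, hh, fun B hB => Or.inr (hp hB), fun b hb => ?_⟩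
      have := hneg b hb
      exact not_not.mp this
  have hCX : CGL P Y ⊆ M.pos := by
    rw [hMpos]
    exact Set.subset_sUnion_of_mem hCsf
  -- Y ⊆ CGL P M.pos
  have hYCX : Y ⊆ CGL P M.pos := by
    apply le_CGL
    intro A hA
    have hA' : A ∉ FP P M := by rw [← hMneg]; exact hA
    simp only [FP, Set.mem_setOf_eq] at hA'
    push_neg at hA'
    obtain ⟨c, hc, hh, h1, h2⟩ := hA'
    exact ⟨⟨c.head, c.pos, ∅⟩, ⟨c, hc, h2, rfl⟩, hh, fun B hB => h1 B hB⟩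
  -- Y is a post-fixpoint of CGL², hence Y ⊆ G
  have hYG : Y ⊆ G := by
    apply OrderHom.le_gfp
    calc Y ⊆ CGL P M.pos := hYCX
      _ ⊆ CGL P (CGL P Y) := CGL_antitone P hCX
  have hnegG : M.neg = Gᶜ := by
    apply subset_antisymm hNG
    intro a ha
    by_contra hna
    exact ha (hYG hna)
  -- L is self-founded w.r.t. M, hence L ⊆ M.pos
  have hLsf : SelfFounded P M L := by
    constructor
    · intro A hA hA'
      rw [hnegG] at hA'
      exact hA' (hLG hA)
    · intro A hA
      rw [← hCGL_G, ← tdef_cgl] at hA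
      obtain ⟨c', ⟨c, hc, hneg, rfl⟩, hh, hp⟩ := hA
      refine ⟨c, hc, hh, fun B hB => Or.inr (by rw [hCGL_G] at hp; exact hp hB),
        fun b hb => by rw [hnegG]; exact hneg b hb⟩
  have hLX : L ⊆ M.pos := by
    rw [hMpos]
    exact Set.subset_sUnion_of_mem hLsf
  exact ⟨subset_antisymm hXL hLX, hnegG⟩
end

section
/- There exists a normal logic program P, namely {p ← p, q ← ¬p}, having two incomparable total models M₁ = {p, ¬q} and M₂ = {¬p, q} such that for each of them there is a corresponding partial level mapping making P satisfy conditions (Ci) and (Cii); hence there is in general no greatest model satisfying (Ci) together with (Cii). -/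
/-- `I` is a (partial) model of `P`. -/
def pModel {atom : Type*} (P : Program atom) (I : PInterp atom) : Prop :=
  ∀ c ∈ P, c.pos ⊆ I.pos → (∀ b ∈ c.neg, b ∈ I.neg) → c.head ∈ I.pos

/-- `P` satisfies conditions (Ci)/(Cii) with respect to `I` and the `I`-partial level
mapping `l`: every atom `A` in `dom(l) = I⁺ ∪ I⁻` satisfies (Ci) or (Cii). -/
def satCC {atom : Type*} (P : Program atom) (I : PInterp atom)
    (l : atom → Ordinal) : Prop :=
  ∀ A, A ∈ I.pos ∪ I.neg →
    -- (Ci)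
    ((A ∈ I.pos ∧ ∃ c ∈ P, c.head = A ∧
        (∀ B ∈ c.pos, B ∈ I.pos ∧ l B ≤ l A) ∧
        (∀ b ∈ c.neg, b ∈ I.neg ∧ l b < l A)) ∨
    -- (Cii)
     (A ∈ I.neg ∧ ∀ c ∈ P, c.head = A →
        (∃ B ∈ c.pos, B ∈ I.neg ∧ l B ≤ l A) ∨
        (∃ b ∈ c.neg, b ∈ I.pos ∧ l b < l A)))

/-- There is a normal program `P = {p ← p, q ← ¬p}` (here `p = true`,
`q = false` over the atoms `Bool`) with two incomparable total models
`M₁ = {p, ¬q}` and `M₂ = {¬p, q}`, each admitting a partial level mapping making `P`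
satisfy (Ci)/(Cii); hence there is no greatest model of `P` satisfying (Ci)/(Cii). -/
theorem stmt17 :
    ∃ (P : Program Bool) (M₁ M₂ : PInterp Bool),
      P = {⟨true, {true}, ∅⟩, ⟨false, ∅, {true}⟩} ∧
      M₁.pos = {true} ∧ M₁.neg = {false} ∧
      M₂.pos = {false} ∧ M₂.neg = {true} ∧
      pModel P M₁ ∧ pModel P M₂ ∧
      M₁.pos ∪ M₁.neg = Set.univ ∧ M₂.pos ∪ M₂.neg = Set.univ ∧
      ¬ple M₁ M₂ ∧ ¬ple M₂ M₁ ∧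
      (∃ l : Bool → Ordinal, satCC P M₁ l) ∧
      (∃ l : Bool → Ordinal, satCC P M₂ l) ∧
      ¬∃ G : PInterp Bool, (pModel P G ∧ ∃ l : Bool → Ordinal, satCC P G l) ∧
        ∀ I : PInterp Bool, pModel P I → (∃ l : Bool → Ordinal, satCC P I l) →
          ple I G := by
  classical
  set P : Program Bool := {⟨true, {true}, ∅⟩, ⟨false, ∅, {true}⟩} with hP
  refine ⟨P, ⟨{true}, {false}, by simp⟩, ⟨{false}, {true}, by simp⟩,
    rfl, rfl, rfl, rfl, rfl, ?_, ?_, ?_, ?_, ?_, ?_, ?_, ?_, ?_⟩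
  · intro c hc hpos hneg
    rcases hc with h | h <;> subst h <;> simp_all
  · intro c hc hpos hneg
    rcases hc with h | h <;> subst h <;> simp_all
  · ext b; cases b <;> simp
  · ext b; cases b <;> simp
  · rintro ⟨h1, h2⟩; simpa using h1 rfl
  · rintro ⟨h1, h2⟩; simpa using h1 rfl
  · refine ⟨fun b => if b then 0 else 1, ?_⟩
    intro A _
    cases A
    · right
      refine ⟨rfl, ?_⟩
      rintro c (h | h) hh <;> subst h <;> simp_all
    · left
      exact ⟨rfl, ⟨true, {true}, ∅⟩, Or.inl rfl, rfl, by simp, by simp⟩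
  · refine ⟨fun b => if b then 0 else 1, ?_⟩
    intro A _
    cases A
    · left
      refine ⟨rfl, ⟨false, ∅, {true}⟩, Or.inr rfl, rfl, by simp, ?_⟩
      intro b hb
      simp only [Set.mem_singleton_iff] at hb; subst hb
      exact ⟨rfl, by norm_num⟩
    · right
      refine ⟨rfl, ?_⟩
      rintro c (h | h) hh <;> subst h <;> simp_all
  · rintro ⟨G, ⟨hGm, hGl⟩, hGge⟩
    have hM1 : ple ⟨{true}, {false}, by simp⟩ G := by
      apply hGge
      · intro c hc hpos hneg
        rcases hc with h | h <;> subst h <;> simp_all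
      · refine ⟨fun b => if b then 0 else 1, ?_⟩
        intro A _
        cases A
        · right
          refine ⟨rfl, ?_⟩
          rintro c (h | h) hh <;> subst h <;> simp_all
        · left
          exact ⟨rfl, ⟨true, {true}, ∅⟩, Or.inl rfl, rfl, by simp, by simp⟩
    have hM2 : ple ⟨{false}, {true}, by simp⟩ G := by
      apply hGge
      · intro c hc hpos hneg
        rcases hc with h | h <;> subst h <;> simp_all
      · refine ⟨fun b => if b then 0 else 1, ?_⟩
        intro A _
        cases A
        · left
          refine ⟨rfl, ⟨false, ∅, {true}⟩, Or.inr rfl, rfl, by simp, ?_⟩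
          intro b hb
          simp only [Set.mem_singleton_iff] at hb; subst hb
          exact ⟨rfl, by norm_num⟩
        · right
          refine ⟨rfl, ?_⟩
          rintro c (h | h) hh <;> subst h <;> simp_all
    exact G.consistent true (hM1.1 rfl) (hM2.2 rfl)
end
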